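/- Characterization of assume-guarantee model checking: Let S be a finite transition system and let (φ_A, φ_G) be a pair of PLDL formulas. Then ⟨φ_A⟩ S ⟨φ_G⟩ does NOT hold if and only if there is a variable valuation α such that for every variable valuation β there is an initial path π_β through S with (tr(π_β),α) ⊨ φ_A but (tr(π_β),β) ⊭ φ_G. -/

import Mathlib

/- Common development: Parametric Linear Dynamic Logic (PLDL) -/

namespace PLDL

/-- Propositional formulas over atomic propositions `P`. -/
inductive PropForm (P : Type) : Type where
  | tt : PropForm P
  | ff : PropForm P
  | atom : P → PropForm P
  | not : PropForm P → PropForm P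
  | and : PropForm P → PropForm P → PropForm P
  | or : PropForm P → PropForm P → PropForm P

/-- Satisfaction of a propositional formula by a set of atomic propositions. -/
def PropForm.Sat {P : Type} (A : Set P) : PropForm P → Prop
  | .tt => True
  | .ff => False
  | .atom p => p ∈ A
  | .not φ => ¬ PropForm.Sat A φ
  | .and φ ψ => PropForm.Sat A φ ∧ PropForm.Sat A ψ
  | .or φ ψ => PropForm.Sat A φ ∨ PropForm.Sat A ψ

def PropForm.map {P Q : Type} (f : P → Q) : PropForm P → PropForm Q
  | .tt => .tt
  | .ff => .ff
  | .atom p => .atom (f p)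
  | .not φ => .not (PropForm.map f φ)
  | .and φ ψ => .and (PropForm.map f φ) (PropForm.map f ψ)
  | .or φ ψ => .or (PropForm.map f φ) (PropForm.map f ψ)

/-- Position `n` of the word `w` is a changepoint w.r.t. the proposition `c`:
`n = 0` or the truth value of `c` differs at positions `n-1` and `n`. -/
def Cp {P : Type} (c : P) (w : ℕ → Set P) (n : ℕ) : Prop :=
  n = 0 ∨ ¬ ((c ∈ w (n - 1)) ↔ (c ∈ w n))

/-- The infix `w_n ⋯ w_{n+j-1}` contains at most one changepoint w.r.t. `c`
(the first position of an infix is always a changepoint of the infix, so this says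
that the truth value of `c` is constant on positions `n, …, n+j-1`). -/
def CpFree {P : Type} (c : P) (w : ℕ → Set P) (n j : ℕ) : Prop :=
  ∀ i, n ≤ i → i + 1 < n + j → ((c ∈ w i) ↔ (c ∈ w (i + 1)))

/-- `w` is `k`-bounded w.r.t. `c`: every block has length at most `k`, i.e.
every changepoint is followed by another changepoint within distance `k`. -/
def Bounded {P : Type} (c : P) (w : ℕ → Set P) (k : ℕ) : Prop :=
  ∀ n, Cp c w n → ∃ m, n < m ∧ m ≤ n + k ∧ Cp c w m

/-- `w` is `k`-spaced w.r.t. `c`: it has infinitely many changepoints and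
every block has length at least `k`. -/
def Spaced {P : Type} (c : P) (w : ℕ → Set P) (k : ℕ) : Prop :=
  (∀ N, ∃ n, N < n ∧ Cp c w n) ∧
  (∀ m n, Cp c w m → Cp c w n → m < n → m + k ≤ n)

mutual
/-- PLDL formulas over atomic propositions `P` and variables `V`, possibly with
changepoint-bounded operators (which store the distinguished proposition). -/
inductive Formula (P V : Type) : Type where
  | pos : P → Formula P V
  | neg : P → Formula P V
  | and : Formula P V → Formula P V → Formula P V
  | or : Formula P V → Formula P V → Formula P V
  | dia : Reg P V → Formula P V → Formula P V
  | box : Reg P V → Formula P V → Formula P V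
  | diaCp : P → Reg P V → Formula P V → Formula P V
  | boxCp : P → Reg P V → Formula P V → Formula P V
  | diaLe : Reg P V → V → Formula P V → Formula P V
  | boxLe : Reg P V → V → Formula P V → Formula P V

/-- Regular expressions with tests. -/
inductive Reg (P V : Type) : Type where
  | prop : PropForm P → Reg P V
  | test : Formula P V → Reg P V
  | plus : Reg P V → Reg P V → Reg P V
  | comp : Reg P V → Reg P V → Reg P V
  | star : Reg P V → Reg P V
end

mutual
/-- Semantics:  `Sat w α n φ` means `(w, n, α) ⊨ φ`. -/
def Sat {P V : Type} (w : ℕ → Set P) (α : V → ℕ) : ℕ → Formula P V → Prop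
  | n, .pos p => p ∈ w n
  | n, .neg p => p ∉ w n
  | n, .and φ ψ => Sat w α n φ ∧ Sat w α n ψ
  | n, .or φ ψ => Sat w α n φ ∨ Sat w α n ψ
  | n, .dia r φ => ∃ j : ℕ, Match w α r n (n + j) ∧ Sat w α (n + j) φ
  | n, .box r φ => ∀ j : ℕ, Match w α r n (n + j) → Sat w α (n + j) φ
  | n, .diaCp c r φ => ∃ j : ℕ, Match w α r n (n + j) ∧ CpFree c w n j ∧ Sat w α (n + j) φ
  | n, .boxCp c r φ => ∀ j : ℕ, Match w α r n (n + j) → CpFree c w n j → Sat w α (n + j) φ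
  | n, .diaLe r z φ => ∃ j : ℕ, j ≤ α z ∧ Match w α r n (n + j) ∧ Sat w α (n + j) φ
  | n, .boxLe r z φ => ∀ j : ℕ, j ≤ α z → Match w α r n (n + j) → Sat w α (n + j) φ

/-- The match relation `R(r, w, α)`. -/
def Match {P V : Type} (w : ℕ → Set P) (α : V → ℕ) : Reg P V → ℕ → ℕ → Prop
  | .prop φ, m, n => n = m + 1 ∧ PropForm.Sat (w m) φ
  | .test θ, m, n => n = m ∧ Sat w α m θ
  | .plus r s, m, n => Match w α r m n ∨ Match w α s m n
  | .comp r s, m, n => ∃ k, Match w α r m k ∧ Match w α s k n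
  | .star r, m, n => Relation.ReflTransGen (fun a b => Match w α r a b) m n
end

mutual
/-- The set of subformulas `cl(φ)` (regular expressions are not subformulas,
but the formulas appearing in tests are). -/
def Formula.cl {P V : Type} : Formula P V → Set (Formula P V)
  | .pos p => {Formula.pos p}
  | .neg p => {Formula.neg p}
  | .and φ ψ => insert (Formula.and φ ψ) (Formula.cl φ ∪ Formula.cl ψ)
  | .or φ ψ => insert (Formula.or φ ψ) (Formula.cl φ ∪ Formula.cl ψ)
  | .dia r φ => insert (Formula.dia r φ) (Reg.cl r ∪ Formula.cl φ)
  | .box r φ => insert (Formula.box r φ) (Reg.cl r ∪ Formula.cl φ)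
  | .diaCp c r φ => insert (Formula.diaCp c r φ) (Reg.cl r ∪ Formula.cl φ)
  | .boxCp c r φ => insert (Formula.boxCp c r φ) (Reg.cl r ∪ Formula.cl φ)
  | .diaLe r z φ => insert (Formula.diaLe r z φ) (Reg.cl r ∪ Formula.cl φ)
  | .boxLe r z φ => insert (Formula.boxLe r z φ) (Reg.cl r ∪ Formula.cl φ)

/-- The subformulas appearing in the tests of a regular expression. -/
def Reg.cl {P V : Type} : Reg P V → Set (Formula P V)
  | .prop _ => ∅
  | .test θ => Formula.cl θ
  | .plus r s => Reg.cl r ∪ Reg.cl s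
  | .comp r s => Reg.cl r ∪ Reg.cl s
  | .star r => Reg.cl r
end

/-- The length of a regular expression. -/
def Reg.len {P V : Type} : Reg P V → ℕ
  | .prop _ => 1
  | .test _ => 1
  | .plus r s => Reg.len r + Reg.len s + 1
  | .comp r s => Reg.len r + Reg.len s + 1
  | .star r => Reg.len r + 1

mutual
/-- Sum of the lengths of the regular expressions appearing in a formula
(counted with multiplicity). -/
def Formula.regLen {P V : Type} : Formula P V → ℕ
  | .pos _ => 0
  | .neg _ => 0
  | .and φ ψ => Formula.regLen φ + Formula.regLen ψ
  | .or φ ψ => Formula.regLen φ + Formula.regLen ψ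
  | .dia r φ => Reg.len r + Reg.regLen r + Formula.regLen φ
  | .box r φ => Reg.len r + Reg.regLen r + Formula.regLen φ
  | .diaCp _ r φ => Reg.len r + Reg.regLen r + Formula.regLen φ
  | .boxCp _ r φ => Reg.len r + Reg.regLen r + Formula.regLen φ
  | .diaLe r _ φ => Reg.len r + Reg.regLen r + Formula.regLen φ
  | .boxLe r _ φ => Reg.len r + Reg.regLen r + Formula.regLen φ

/-- Sum of the lengths of the regular expressions appearing in the tests of `r`. -/
def Reg.regLen {P V : Type} : Reg P V → ℕ
  | .prop _ => 0
  | .test θ => Formula.regLen θ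
  | .plus r s => Reg.regLen r + Reg.regLen s
  | .comp r s => Reg.regLen r + Reg.regLen s
  | .star r => Reg.regLen r
end

/-- The size `|φ|` of a formula: the number of subformulas `|cl(φ)|` plus the sum of
the lengths of the regular expressions appearing in `φ` (with multiplicity). -/
noncomputable def Formula.size {P V : Type} (φ : Formula P V) : ℕ :=
  (Formula.cl φ).ncard + Formula.regLen φ

mutual
/-- Number of syntax nodes of a formula (a structural size notion, used for
regular expressions with tests). -/
def Formula.nodes {P V : Type} : Formula P V → ℕ
  | .pos _ => 1
  | .neg _ => 1
  | .and φ ψ => Formula.nodes φ + Formula.nodes ψ + 1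
  | .or φ ψ => Formula.nodes φ + Formula.nodes ψ + 1
  | .dia r φ => Reg.nodes r + Formula.nodes φ + 1
  | .box r φ => Reg.nodes r + Formula.nodes φ + 1
  | .diaCp _ r φ => Reg.nodes r + Formula.nodes φ + 1
  | .boxCp _ r φ => Reg.nodes r + Formula.nodes φ + 1
  | .diaLe r _ φ => Reg.nodes r + Formula.nodes φ + 1
  | .boxLe r _ φ => Reg.nodes r + Formula.nodes φ + 1

/-- Number of syntax nodes of a regular expression with tests (the size of `r`). -/
def Reg.nodes {P V : Type} : Reg P V → ℕ
  | .prop _ => 1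
  | .test θ => Formula.nodes θ + 1
  | .plus r s => Reg.nodes r + Reg.nodes s + 1
  | .comp r s => Reg.nodes r + Reg.nodes s + 1
  | .star r => Reg.nodes r + 1
end

mutual
/-- `var_◇(φ)`: variables parameterizing diamond-operators in subformulas of `φ`. -/
def Formula.varDia {P V : Type} : Formula P V → Set V
  | .pos _ => ∅
  | .neg _ => ∅
  | .and φ ψ => Formula.varDia φ ∪ Formula.varDia ψ
  | .or φ ψ => Formula.varDia φ ∪ Formula.varDia ψ
  | .dia r φ => Reg.varDia r ∪ Formula.varDia φ
  | .box r φ => Reg.varDia r ∪ Formula.varDia φ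
  | .diaCp _ r φ => Reg.varDia r ∪ Formula.varDia φ
  | .boxCp _ r φ => Reg.varDia r ∪ Formula.varDia φ
  | .diaLe r z φ => insert z (Reg.varDia r ∪ Formula.varDia φ)
  | .boxLe r _ φ => Reg.varDia r ∪ Formula.varDia φ

def Reg.varDia {P V : Type} : Reg P V → Set V
  | .prop _ => ∅
  | .test θ => Formula.varDia θ
  | .plus r s => Reg.varDia r ∪ Reg.varDia s
  | .comp r s => Reg.varDia r ∪ Reg.varDia s
  | .star r => Reg.varDia r
end

mutual
/-- `var_□(φ)`: variables parameterizing box-operators in subformulas of `φ`. -/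
def Formula.varBox {P V : Type} : Formula P V → Set V
  | .pos _ => ∅
  | .neg _ => ∅
  | .and φ ψ => Formula.varBox φ ∪ Formula.varBox ψ
  | .or φ ψ => Formula.varBox φ ∪ Formula.varBox ψ
  | .dia r φ => Reg.varBox r ∪ Formula.varBox φ
  | .box r φ => Reg.varBox r ∪ Formula.varBox φ
  | .diaCp _ r φ => Reg.varBox r ∪ Formula.varBox φ
  | .boxCp _ r φ => Reg.varBox r ∪ Formula.varBox φ
  | .diaLe r _ φ => Reg.varBox r ∪ Formula.varBox φ
  | .boxLe r z φ => insert z (Reg.varBox r ∪ Formula.varBox φ)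

def Reg.varBox {P V : Type} : Reg P V → Set V
  | .prop _ => ∅
  | .test θ => Formula.varBox θ
  | .plus r s => Reg.varBox r ∪ Reg.varBox s
  | .comp r s => Reg.varBox r ∪ Reg.varBox s
  | .star r => Reg.varBox r
end

/-- `var(φ) = var_◇(φ) ∪ var_□(φ)`. -/
def Formula.var {P V : Type} (φ : Formula P V) : Set V :=
  Formula.varDia φ ∪ Formula.varBox φ

/-- A PLDL formula is well-formed if `var_◇(φ) ∩ var_□(φ) = ∅`. -/
def Formula.WellFormed {P V : Type} (φ : Formula P V) : Prop :=
  Formula.varDia φ ∩ Formula.varBox φ = ∅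

mutual
/-- No changepoint-bounded operators occur (a genuine PLDL formula). -/
def Formula.NoCp {P V : Type} : Formula P V → Prop
  | .pos _ => True
  | .neg _ => True
  | .and φ ψ => Formula.NoCp φ ∧ Formula.NoCp ψ
  | .or φ ψ => Formula.NoCp φ ∧ Formula.NoCp ψ
  | .dia r φ => Reg.NoCp r ∧ Formula.NoCp φ
  | .box r φ => Reg.NoCp r ∧ Formula.NoCp φ
  | .diaCp _ _ _ => False
  | .boxCp _ _ _ => False
  | .diaLe r _ φ => Reg.NoCp r ∧ Formula.NoCp φ
  | .boxLe r _ φ => Reg.NoCp r ∧ Formula.NoCp φ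

def Reg.NoCp {P V : Type} : Reg P V → Prop
  | .prop _ => True
  | .test θ => Formula.NoCp θ
  | .plus r s => Reg.NoCp r ∧ Reg.NoCp s
  | .comp r s => Reg.NoCp r ∧ Reg.NoCp s
  | .star r => Reg.NoCp r
end

mutual
/-- No parameterized operators occur (an LDL resp. LDL_cp formula). -/
def Formula.NoParam {P V : Type} : Formula P V → Prop
  | .pos _ => True
  | .neg _ => True
  | .and φ ψ => Formula.NoParam φ ∧ Formula.NoParam ψ
  | .or φ ψ => Formula.NoParam φ ∧ Formula.NoParam ψ
  | .dia r φ => Reg.NoParam r ∧ Formula.NoParam φ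
  | .box r φ => Reg.NoParam r ∧ Formula.NoParam φ
  | .diaCp _ r φ => Reg.NoParam r ∧ Formula.NoParam φ
  | .boxCp _ r φ => Reg.NoParam r ∧ Formula.NoParam φ
  | .diaLe _ _ _ => False
  | .boxLe _ _ _ => False

def Reg.NoParam {P V : Type} : Reg P V → Prop
  | .prop _ => True
  | .test θ => Formula.NoParam θ
  | .plus r s => Reg.NoParam r ∧ Reg.NoParam s
  | .comp r s => Reg.NoParam r ∧ Reg.NoParam s
  | .star r => Reg.NoParam r
end

/-- The dual (negation) of a formula, defined via the dualities. -/
def Formula.not {P V : Type} : Formula P V → Formula P V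
  | .pos p => .neg p
  | .neg p => .pos p
  | .and φ ψ => .or (Formula.not φ) (Formula.not ψ)
  | .or φ ψ => .and (Formula.not φ) (Formula.not ψ)
  | .dia r φ => .box r (Formula.not φ)
  | .box r φ => .dia r (Formula.not φ)
  | .diaCp c r φ => .boxCp c r (Formula.not φ)
  | .boxCp c r φ => .diaCp c r (Formula.not φ)
  | .diaLe r z φ => .boxLe r z (Formula.not φ)
  | .boxLe r z φ => .diaLe r z (Formula.not φ)

mutual
/-- Renaming of atomic propositions. -/
def Formula.map {P Q V : Type} (f : P → Q) : Formula P V → Formula Q V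
  | .pos p => .pos (f p)
  | .neg p => .neg (f p)
  | .and φ ψ => .and (Formula.map f φ) (Formula.map f ψ)
  | .or φ ψ => .or (Formula.map f φ) (Formula.map f ψ)
  | .dia r φ => .dia (Reg.map f r) (Formula.map f φ)
  | .box r φ => .box (Reg.map f r) (Formula.map f φ)
  | .diaCp c r φ => .diaCp (f c) (Reg.map f r) (Formula.map f φ)
  | .boxCp c r φ => .boxCp (f c) (Reg.map f r) (Formula.map f φ)
  | .diaLe r z φ => .diaLe (Reg.map f r) z (Formula.map f φ)
  | .boxLe r z φ => .boxLe (Reg.map f r) z (Formula.map f φ)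

def Reg.map {P Q V : Type} (f : P → Q) : Reg P V → Reg Q V
  | .prop φ => .prop (PropForm.map f φ)
  | .test θ => .test (Formula.map f θ)
  | .plus r s => .plus (Reg.map f r) (Reg.map f s)
  | .comp r s => .comp (Reg.map f r) (Reg.map f s)
  | .star r => .star (Reg.map f r)
end

mutual
/-- `rel(φ)`: replace every parameterized diamond-operator (and, dually, every
parameterized box-operator) by the corresponding changepoint-bounded operator
w.r.t. the distinguished proposition `c`, also inside tests. -/
def Formula.rel {P V : Type} (c : P) : Formula P V → Formula P V
  | .pos p => .pos p
  | .neg p => .neg p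
  | .and φ ψ => .and (Formula.rel c φ) (Formula.rel c ψ)
  | .or φ ψ => .or (Formula.rel c φ) (Formula.rel c ψ)
  | .dia r φ => .dia (Reg.rel c r) (Formula.rel c φ)
  | .box r φ => .box (Reg.rel c r) (Formula.rel c φ)
  | .diaCp d r φ => .diaCp d (Reg.rel c r) (Formula.rel c φ)
  | .boxCp d r φ => .boxCp d (Reg.rel c r) (Formula.rel c φ)
  | .diaLe r _ φ => .diaCp c (Reg.rel c r) (Formula.rel c φ)
  | .boxLe r _ φ => .boxCp c (Reg.rel c r) (Formula.rel c φ)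

def Reg.rel {P V : Type} (c : P) : Reg P V → Reg P V
  | .prop φ => .prop φ
  | .test θ => .test (Formula.rel c θ)
  | .plus r s => .plus (Reg.rel c r) (Reg.rel c s)
  | .comp r s => .comp (Reg.rel c r) (Reg.rel c s)
  | .star r => .star (Reg.rel c r)
end

mutual
/-- Remove the parameters: each `⟨r⟩_{≤x}ψ` becomes `⟨r⟩ψ` (dually for boxes). -/
def Formula.dropParam {P V : Type} : Formula P V → Formula P V
  | .pos p => .pos p
  | .neg p => .neg p
  | .and φ ψ => .and (Formula.dropParam φ) (Formula.dropParam ψ)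
  | .or φ ψ => .or (Formula.dropParam φ) (Formula.dropParam ψ)
  | .dia r φ => .dia (Reg.dropParam r) (Formula.dropParam φ)
  | .box r φ => .box (Reg.dropParam r) (Formula.dropParam φ)
  | .diaCp c r φ => .diaCp c (Reg.dropParam r) (Formula.dropParam φ)
  | .boxCp c r φ => .boxCp c (Reg.dropParam r) (Formula.dropParam φ)
  | .diaLe r _ φ => .dia (Reg.dropParam r) (Formula.dropParam φ)
  | .boxLe r _ φ => .box (Reg.dropParam r) (Formula.dropParam φ)

def Reg.dropParam {P V : Type} : Reg P V → Reg P V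
  | .prop φ => .prop φ
  | .test θ => .test (Formula.dropParam θ)
  | .plus r s => .plus (Reg.dropParam r) (Reg.dropParam s)
  | .comp r s => .comp (Reg.dropParam r) (Reg.dropParam s)
  | .star r => .star (Reg.dropParam r)
end

/-- `χ_{∞c} = [tt*]⟨tt*⟩c`: `c` holds infinitely often. -/
def chiInfPos {P V : Type} (c : P) : Formula P V :=
  .box (.star (.prop .tt)) (.dia (.star (.prop .tt)) (.pos c))

/-- `χ_{∞¬c} = [tt*]⟨tt*⟩¬c`: `¬c` holds infinitely often. -/
def chiInfNeg {P V : Type} (c : P) : Formula P V :=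
  .box (.star (.prop .tt)) (.dia (.star (.prop .tt)) (.neg c))

/-- `c(φ) = rel(φ) ∧ χ_{∞c} ∧ χ_{∞¬c}`, where the original formula over `P` is
embedded via `f` into the extended set of propositions containing the fresh
proposition `c`. -/
def cFormAt {P Q V : Type} (c : Q) (f : P → Q) (φ : Formula P V) : Formula Q V :=
  .and (Formula.rel c (Formula.map f φ)) (.and (chiInfPos c) (chiInfNeg c))

end PLDL
namespace PLDL

/-! ### Automata -/

/-- Positive Boolean combinations over `Q` (including `tt` and `ff`). -/
inductive PosBool (Q : Type) : Type where
  | tt : PosBool Q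
  | ff : PosBool Q
  | var : Q → PosBool Q
  | and : PosBool Q → PosBool Q → PosBool Q
  | or : PosBool Q → PosBool Q → PosBool Q

/-- A set `S ⊆ Q` satisfies a positive Boolean combination. -/
def PosBool.Sat {Q : Type} (S : Set Q) : PosBool Q → Prop
  | .tt => True
  | .ff => False
  | .var q => q ∈ S
  | .and f g => PosBool.Sat S f ∧ PosBool.Sat S g
  | .or f g => PosBool.Sat S f ∨ PosBool.Sat S g

/-- An alternating Büchi automaton with states `Q` and alphabet `S`. -/
structure ABA (Q S : Type) where
  init : Q
  δ : Q → S → PosBool Q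
  acc : Set Q

/-- A run of an alternating Büchi automaton on `w`: a directed graph with
vertices in `Q × ℕ`, edges only from level `n` to level `n+1`, containing
`(init, 0)`, such that the successors of every vertex satisfy the transition
condition. -/
structure ABARun {Q S : Type} (A : ABA Q S) (w : ℕ → S) where
  V : Set (Q × ℕ)
  E : Q × ℕ → Q × ℕ → Prop
  edge_ok : ∀ u v, E u v → u ∈ V ∧ v ∈ V ∧ v.2 = u.2 + 1
  init_mem : (A.init, 0) ∈ V
  trans : ∀ q n, (q, n) ∈ V → PosBool.Sat {q' | E (q, n) (q', n + 1)} (A.δ q (w n))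

/-- A run is accepting if every infinite path through it visits the accepting
states infinitely often. -/
def ABARun.Accepting {Q S : Type} {A : ABA Q S} {w : ℕ → S} (ρ : ABARun A w) : Prop :=
  ∀ (f : ℕ → Q) (s : ℕ), (f 0, s) ∈ ρ.V → (∀ i, ρ.E (f i, s + i) (f (i + 1), s + i + 1)) →
    ∀ N, ∃ i, N ≤ i ∧ f i ∈ A.acc

/-- The language of an alternating Büchi automaton. -/
def ABA.Lang {Q S : Type} (A : ABA Q S) : Set (ℕ → S) :=
  { w | ∃ ρ : ABARun A w, ρ.Accepting }

/-- The bounded-match property of a run w.r.t. a set `B` of states and a bound `b`: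
every path of the run all of whose states lie in `B` has length at most `b`. -/
def ABARun.BoundedMatch {Q S : Type} {A : ABA Q S} {w : ℕ → S} (ρ : ABARun A w)
    (B : Set Q) (b : ℕ) : Prop :=
  ∀ (f : ℕ → Q) (n ℓ : ℕ), (∀ i, i ≤ ℓ → f i ∈ B) →
    (∀ i, i < ℓ → ρ.E (f i, n + i) (f (i + 1), n + i + 1)) → (f 0, n) ∈ ρ.V → ℓ ≤ b

/-- A non-deterministic Büchi automaton. -/
structure NBA (Q S : Type) where
  init : Q
  δ : Q → S → Set Q
  acc : Set Q

/-- The language of a non-deterministic Büchi automaton. -/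
def NBA.Lang {Q S : Type} (A : NBA Q S) : Set (ℕ → S) :=
  { w | ∃ ρ : ℕ → Q, ρ 0 = A.init ∧ (∀ n, ρ (n + 1) ∈ A.δ (ρ n) (w n)) ∧
          ∀ N, ∃ n, N ≤ n ∧ ρ n ∈ A.acc }

/-- A deterministic parity automaton. -/
structure DPA (Q S : Type) where
  init : Q
  δ : Q → S → Q
  color : Q → ℕ

/-- The unique run of a deterministic parity automaton. -/
def DPA.run {Q S : Type} (A : DPA Q S) (w : ℕ → S) : ℕ → Q
  | 0 => A.init
  | n + 1 => A.δ (A.run w n) (w n)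

/-- Acceptance: the maximal color occurring infinitely often in the run is even. -/
def DPA.Accepts {Q S : Type} (A : DPA Q S) (w : ℕ → S) : Prop :=
  ∃ k, Even k ∧ (∀ N, ∃ n, N ≤ n ∧ A.color (A.run w n) = k) ∧
    ∀ j, (∀ N, ∃ n, N ≤ n ∧ A.color (A.run w n) = j) → j ≤ k

/-- The language of a deterministic parity automaton. -/
def DPA.Lang {Q S : Type} (A : DPA Q S) : Set (ℕ → S) := { w | A.Accepts w }

/-! ### Transition systems -/

/-- A transition system with states `S` labeled by sets of atomic propositions in `P`. -/
structure TS (S P : Type) where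
  init : S
  E : S → S → Prop
  label : S → Set P

/-- A path through a transition system (starting anywhere). -/
def TS.IsPath {S P : Type} (T : TS S P) (π : ℕ → S) : Prop :=
  ∀ n, T.E (π n) (π (n + 1))

/-- An initial path through a transition system. -/
def TS.IsInitialPath {S P : Type} (T : TS S P) (π : ℕ → S) : Prop :=
  π 0 = T.init ∧ T.IsPath π

/-- The trace of a path. -/
def TS.trace {S P : Type} (T : TS S P) (π : ℕ → S) : ℕ → Set P :=
  fun n => T.label (π n)

/-- The parallel composition `S ∥ S'` of two transition systems whose initial
states carry the same label. -/
def TS.par {S S' P : Type} (T : TS S P) (T' : TS S' P)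
    (h : T.label T.init = T'.label T'.init) :
    TS { x : S × S' // T.label x.1 = T'.label x.2 } P where
  init := ⟨(T.init, T'.init), h⟩
  E := fun x y => T.E x.val.1 y.val.1 ∧ T'.E x.val.2 y.val.2
  label := fun x => T.label x.val.1

/-- `T` satisfies `φ` with respect to `α`: every trace of an initial path is a
model of `φ` w.r.t. `α`. -/
def TS.Satisfies {S P V : Type} (T : TS S P) (φ : Formula P V) (α : V → ℕ) : Prop :=
  ∀ π : ℕ → S, T.IsInitialPath π → Sat (T.trace π) α 0 φ

/-- The assume-guarantee specification `⟨φ_A⟩ T ⟨φ_G⟩`: for every countably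
infinite transition system `T'` (with matching initial label), if `T ∥ T'`
satisfies `φ_A` w.r.t. some `α`, then `T ∥ T'` satisfies `φ_G` w.r.t. some `β`. -/
def AGSpec {S P V : Type} (φA : Formula P V) (T : TS S P) (φG : Formula P V) : Prop :=
  ∀ (T' : TS ℕ P) (h : T.label T.init = T'.label T'.init),
    (∃ α : V → ℕ, (T.par T' h).Satisfies φA α) → ∃ β : V → ℕ, (T.par T' h).Satisfies φG β

/-! ### ε-NFAs with markings -/

/-- An ε-NFA with markings: states `Q`, alphabet `Set P`, an initial state, letter
transitions, ε-transitions, final states, and a partial marking of states by formulas. -/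
structure MNFA (Q P V : Type) where
  init : Q
  δ : Q → Set P → Set Q
  eps : Q → Set Q
  final : Set Q
  mark : Q → Option (Formula P V)

/-- `EpsPath A q q' π`: `π` is an ε-path from `q` to `q'`. -/
inductive EpsPath {Q P V : Type} (A : MNFA Q P V) : Q → Q → List Q → Prop where
  | single (q : Q) : EpsPath A q q [q]
  | cons (q q' q'' : Q) (l : List Q) : q' ∈ A.eps q → EpsPath A q' q'' l →
      EpsPath A q q'' (q :: l)

/-- `m(π)`: the set of markings visited by an ε-path. -/
def marks {Q P V : Type} (A : MNFA Q P V) (π : List Q) : Set (Formula P V) :=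
  { θ | ∃ q ∈ π, A.mark q = some θ }

/-- `A` has an accepting run on the prefix `w₀ ⋯ w_{n-1}` of `w` with ε-paths
`π₀, …, π_n` such that `w_i w_{i+1} ⋯ ⊨ ⋀ m(π_i)` (w.r.t. `α`) for all `0 ≤ i ≤ n`. -/
def GoodRun {Q P V : Type} (A : MNFA Q P V) (w : ℕ → Set P) (α : V → ℕ) (n : ℕ) : Prop :=
  ∃ ρ : ℕ → Q, ρ 0 = A.init ∧
    (∀ i, i < n → ∃ (q' : Q) (π : List Q), EpsPath A (ρ i) q' π ∧
      ρ (i + 1) ∈ A.δ q' (w i) ∧ ∀ θ ∈ marks A π, Sat (fun j => w (i + j)) α 0 θ) ∧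
    (∃ (q' : Q) (π : List Q), EpsPath A (ρ n) q' π ∧ q' ∈ A.final ∧
      ∀ θ ∈ marks A π, Sat (fun j => w (n + j)) α 0 θ)

/-! ### Realizability -/

/-- The outcome of the play in which Player I plays `i` and Player O plays
according to the strategy `σ`. -/
def outcomeW {I O : Type} (σ : List (Set I) → Set O) (i : ℕ → Set I) : ℕ → Set (I ⊕ O) :=
  fun n => Sum.inl '' i n ∪ Sum.inr '' σ ((List.range (n + 1)).map i)

/-- `φ` is realizable over `(I, O)` with respect to the valuation `α`: Player O
has a strategy such that every outcome satisfies `φ` w.r.t. `α`. -/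
def RealizableWrt {I O V : Type} (φ : Formula (I ⊕ O) V) (α : V → ℕ) : Prop :=
  ∃ σ : List (Set I) → Set O, ∀ i : ℕ → Set I, Sat (outcomeW σ i) α 0 φ

/-- Realizability over the swapped partition `(O, I)`: the player controlling `O`
moves first in each round, the player controlling `I` responds. -/
def RealizableSwapWrt {I O V : Type} (φ : Formula (I ⊕ O) V) (α : V → ℕ) : Prop :=
  ∃ σ : List (Set O) → Set I, ∀ o : ℕ → Set O,
    Sat (fun n => Sum.inl '' σ ((List.range (n + 1)).map o) ∪ Sum.inr '' o n) α 0 φ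

/-- A (finite-state) transducer. -/
structure Transducer (Q A B : Type) where
  init : Q
  δ : Q → A → Q
  out : Q → B

/-- The extended transition function `δ*`. -/
def Transducer.run {Q A B : Type} (T : Transducer Q A B) (l : List A) : Q :=
  l.foldl T.δ T.init

/-- The strategy implemented by a transducer: `f_T(w) = τ(δ*(w))`. -/
def Transducer.strategy {Q A B : Type} (T : Transducer Q A B) : List A → B :=
  fun l => T.out (T.run l)

end PLDL

/-! The forward direction projects a violating path of `T ∥ T'` to `T`. Conversely, as `φ_G`
has finitely many variables, countably many valuations `β₀, β₁, …` represent every valuation up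
to agreement on `var(φ_G)`. Pick a violating path `π_m` for each `β_m` and let `T'` be the tree
with one branch per trace `tr(π_m)`: the traces of `T ∥ T'` are exactly these, so `T ∥ T'`
satisfies `φ_A` w.r.t. `α`, yet for every `β` it violates `φ_G` on the branch of the `β_m` that
agrees with `β`. -/

namespace PLDL

variable {P V : Type}

mutual
theorem Formula.var_finite : ∀ φ : Formula P V, φ.var.Finite
  | .pos _ | .neg _ => by simp [Formula.var, Formula.varDia, Formula.varBox]
  | .and φ ψ | .or φ ψ => by
      have := φ.var_finite; have := ψ.var_finite
      simp_all [Formula.var, Formula.varDia, Formula.varBox]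
  | .dia r φ | .box r φ | .diaCp _ r φ | .boxCp _ r φ | .diaLe r _ φ | .boxLe r _ φ => by
      have := r.var_finite; have := φ.var_finite
      simp_all [Formula.var, Formula.varDia, Formula.varBox]

theorem Reg.var_finite : ∀ r : Reg P V, (r.varDia ∪ r.varBox).Finite
  | .prop _ => by simp [Reg.varDia, Reg.varBox]
  | .test θ => θ.var_finite
  | .plus r s | .comp r s => by
      have := r.var_finite; have := s.var_finite
      simp_all [Reg.varDia, Reg.varBox]
  | .star r => r.var_finite
end

section Congr

variable {w : ℕ → Set P} {α α' : V → ℕ} {U : Set V}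

mutual
theorem sat_congr_of_eqOn (hU : Set.EqOn α α' U) : ∀ {φ : Formula P V}, φ.varDia ⊆ U →
    φ.varBox ⊆ U → ∀ n, (Sat w α n φ ↔ Sat w α' n φ)
  | .pos _, _, _, _ | .neg _, _, _, _ => Iff.rfl
  | .and φ ψ, hD, hB, n | .or φ ψ, hD, hB, n => by
      simp only [Formula.varDia, Formula.varBox, Set.union_subset_iff] at hD hB
      simp only [Sat, sat_congr_of_eqOn hU hD.1 hB.1, sat_congr_of_eqOn hU hD.2 hB.2]
  | .dia r φ, hD, hB, n | .box r φ, hD, hB, n | .diaCp _ r φ, hD, hB, n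
  | .boxCp _ r φ, hD, hB, n => by
      simp only [Formula.varDia, Formula.varBox, Set.union_subset_iff] at hD hB
      simp only [Sat, match_congr_of_eqOn hU hD.1 hB.1, sat_congr_of_eqOn hU hD.2 hB.2]
  | .diaLe r z φ, hD, hB, n => by
      simp only [Formula.varDia, Formula.varBox, Set.union_subset_iff,
        Set.insert_subset_iff] at hD hB
      simp only [Sat, hU hD.1, match_congr_of_eqOn hU hD.2.1 hB.1,
        sat_congr_of_eqOn hU hD.2.2 hB.2]
  | .boxLe r z φ, hD, hB, n => by
      simp only [Formula.varDia, Formula.varBox, Set.union_subset_iff,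
        Set.insert_subset_iff] at hD hB
      simp only [Sat, hU hB.1, match_congr_of_eqOn hU hD.1 hB.2.1,
        sat_congr_of_eqOn hU hD.2 hB.2.2]

theorem match_congr_of_eqOn (hU : Set.EqOn α α' U) : ∀ {r : Reg P V}, r.varDia ⊆ U →
    r.varBox ⊆ U → ∀ m n, (Match w α r m n ↔ Match w α' r m n)
  | .prop _, _, _, _, _ => Iff.rfl
  | .test θ, hD, hB, m, n => by
      simp only [Match, sat_congr_of_eqOn hU hD hB]
  | .plus r s, hD, hB, m, n | .comp r s, hD, hB, m, n => by
      simp only [Reg.varDia, Reg.varBox, Set.union_subset_iff] at hD hB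
      simp only [Match, match_congr_of_eqOn hU hD.1 hB.1, match_congr_of_eqOn hU hD.2 hB.2]
  | .star r, hD, hB, m, n => by
      simp only [Reg.varDia, Reg.varBox] at hD hB
      simp only [Match, match_congr_of_eqOn hU hD hB]
end

theorem sat_congr (φ : Formula P V) (h : Set.EqOn α α' φ.var) (n : ℕ) :
    Sat w α n φ ↔ Sat w α' n φ :=
  sat_congr_of_eqOn h Set.subset_union_left Set.subset_union_right n

end Congr

theorem exists_seq_eqOn_of_finite {X : Type*} [Countable X] [Inhabited X] {U : Set V}
    (hU : U.Finite) : ∃ βs : ℕ → V → X, ∀ β : V → X, ∃ m, Set.EqOn β (βs m) U := by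
  classical
  have := hU.to_subtype
  obtain ⟨e, he⟩ := exists_surjective_nat (U → X)
  refine ⟨fun m v => if hv : v ∈ U then e m ⟨v, hv⟩ else default, fun β => ?_⟩
  obtain ⟨m, hm⟩ := he fun v => β v
  exact ⟨m, fun v hv => by simp [hv, hm]⟩

theorem TS.satisfies_par_iff {S S' : Type} (T : TS S P) (T' : TS S' P)
    (h : T.label T.init = T'.label T'.init) (φ : Formula P V) (α : V → ℕ) :
    (T.par T' h).Satisfies φ α ↔ ∀ π π', T.IsInitialPath π → T'.IsInitialPath π' →
      T.trace π = T'.trace π' → Sat (T.trace π) α 0 φ := by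
  constructor
  · intro H π π' hπ hπ' htr
    exact H (fun n => ⟨(π n, π' n), congrFun htr n⟩)
      ⟨Subtype.ext (Prod.ext hπ.1 hπ'.1), fun n => ⟨hπ.2 n, hπ'.2 n⟩⟩
  · intro H ρ hρ
    exact H (fun n => (ρ n).1.1) (fun n => (ρ n).1.2)
      ⟨congrArg (·.1.1) hρ.1, fun n => (hρ.2 n).1⟩ ⟨congrArg (·.1.2) hρ.1, fun n => (hρ.2 n).2⟩
      (funext fun n => (ρ n).2)

def combPos (m : ℕ) : ℕ → ℕ
  | 0 => 0
  | n + 1 => Nat.pair m n + 1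

/-- The tree with one branch per word `u m`: node `combPos m n` carries the letter `u m n`.
All branches share the root `0`, labelled `u 0 0`. -/
def TS.comb (u : ℕ → ℕ → Set P) : TS ℕ P where
  init := 0
  E a b := ∃ m n, a = combPos m n ∧ b = combPos m (n + 1)
  label
    | 0 => u 0 0
    | b + 1 => u (Nat.unpair b).1 ((Nat.unpair b).2 + 1)

theorem combPos_succ_eq_iff {m n m' k : ℕ} :
    combPos m (n + 1) = combPos m' k ↔ m = m' ∧ n + 1 = k := by
  cases k <;> simp [combPos, Nat.pair_eq_pair]

theorem TS.trace_comb_combPos {u : ℕ → ℕ → Set P} (hu : ∀ m, u m 0 = u 0 0) (m : ℕ) :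
    (TS.comb u).trace (combPos m) = u m := by
  funext n
  cases n with
  | zero => exact (hu m).symm
  | succ n => simp [TS.trace, TS.comb, combPos, Nat.unpair_pair]

theorem TS.isInitialPath_comb_iff {u : ℕ → ℕ → Set P} {σ : ℕ → ℕ} :
    (TS.comb u).IsInitialPath σ ↔ ∃ m, σ = combPos m := by
  constructor
  · rintro ⟨h0, hσ⟩
    obtain ⟨m, k, hk0, h1⟩ := hσ 0
    obtain rfl : k = 0 := by
      cases k
      · rfl
      · simp [combPos, h0, TS.comb] at hk0
    have hsucc : ∀ n, σ (n + 1) = combPos m (n + 1) := by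
      intro n
      induction n with
      | zero => exact h1
      | succ n ih =>
        obtain ⟨m', k, hk, hk'⟩ := hσ (n + 1)
        obtain ⟨rfl, rfl⟩ := combPos_succ_eq_iff.1 (ih ▸ hk)
        exact hk'
    exact ⟨m, funext fun n => by cases n; exacts [h0, hsucc _]⟩
  · rintro ⟨m, rfl⟩
    exact ⟨rfl, fun n => ⟨m, n, rfl, rfl⟩⟩

theorem TS.satisfies_par_comb_iff {S : Type} (T : TS S P) {π : ℕ → ℕ → S}
    (hπ : ∀ m, T.IsInitialPath (π m))
    (h : T.label T.init =
      (TS.comb fun m => T.trace (π m)).label (TS.comb fun m => T.trace (π m)).init)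
    (φ : Formula P V) (α : V → ℕ) :
    (T.par (TS.comb fun m => T.trace (π m)) h).Satisfies φ α ↔
      ∀ m, Sat (T.trace (π m)) α 0 φ := by
  have hu : ∀ m, T.trace (π m) 0 = T.trace (π 0) 0 := fun m => by
    simp only [TS.trace, (hπ m).1, (hπ 0).1]
  simp only [TS.satisfies_par_iff, TS.isInitialPath_comb_iff]
  constructor
  · intro H m
    exact H _ _ (hπ m) ⟨m, rfl⟩ (TS.trace_comb_combPos hu m).symm
  · rintro H π₀ _ - ⟨m, rfl⟩ htr
    rw [htr, TS.trace_comb_combPos hu]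
    exact H m

/-- Characterization of assume-guarantee model checking: for a
finite transition system `T` and PLDL formulas `φ_A`, `φ_G`, the specification
`⟨φ_A⟩ T ⟨φ_G⟩` does not hold iff there is a valuation `α` such that for every
valuation `β` there is an initial path `π_β` through `T` whose trace satisfies
`φ_A` w.r.t. `α` but not `φ_G` w.r.t. `β`. -/
theorem ag_characterization {S P V : Type} [Fintype S] (T : TS S P)
    (φA φG : Formula P V) (hA : Formula.NoCp φA) (hG : Formula.NoCp φG) :
    ¬ AGSpec φA T φG ↔
      ∃ α : V → ℕ, ∀ β : V → ℕ, ∃ π : ℕ → S, T.IsInitialPath π ∧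
        Sat (T.trace π) α 0 φA ∧ ¬ Sat (T.trace π) β 0 φG := by
  constructor
  · simp only [AGSpec, not_forall]
    rintro ⟨T', h, ⟨α, hαA⟩, hnoG⟩
    refine ⟨α, fun β => ?_⟩
    have hβ : ¬ (T.par T' h).Satisfies φG β := fun H => hnoG ⟨β, H⟩
    rw [TS.satisfies_par_iff] at hαA hβ
    push Not at hβ
    obtain ⟨π, π', hπ, hπ', htr, hφ⟩ := hβ
    exact ⟨π, hπ, hαA π π' hπ hπ' htr, hφ⟩
  · rintro ⟨α, hall⟩ hAG
    obtain ⟨βs, hβs⟩ := exists_seq_eqOn_of_finite (X := ℕ) φG.var_finite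
    choose π hπ hπA hπG using fun m => hall (βs m)
    let T' := TS.comb fun m => T.trace (π m)
    have h : T.label T.init = T'.label T'.init := by
      simp only [T', TS.comb, TS.trace, (hπ 0).1]
    obtain ⟨β, hβ⟩ := hAG T' h ⟨α, (T.satisfies_par_comb_iff hπ h φA α).2 hπA⟩
    obtain ⟨m, hm⟩ := hβs β
    exact hπG m ((sat_congr φG hm 0).1 ((T.satisfies_par_comb_iff hπ h φG β).1 hβ m))

end PLDL
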